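/- arXiv:2108.01467 — 2 statements merged into one kernel-verified Lean document; each statement's English description precedes it below -/
import Mathlib

section
/- In the setting of the previous construction (Λ a (T,T₁)-controlled K₁-g-fusion frame for H with frame operator S_C, Γ a (U,U₁)-controlled K₂-g-fusion frame for X with frame operator S_{C'}, W on H and V on X bounded invertible with W* commuting with T and T₁ and V* commuting with U and U₁), let Δ_j = (Λ_j ⊕ Γ_j) P_{W_j ⊕ V_j} (W* ⊕ V*) and X_j = (W ⊕ V)(W_j ⊕ V_j). Then the frame operator of the family {(X_j, Δ_j, v_j)}_{j∈J} equals (W ⊕ V)(S_C ⊕ S_{C'})(W ⊕ V)*; that is, for every (f, g) ∈ H ⊕ X, ∑_{j∈J} v_j² (T ⊕ U)* P_{X_j} Δ_j* Δ_j P_{X_j} (T₁ ⊕ U₁)(f, g) = (W S_C W* f, V S_{C'} V* g). -/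
open ContinuousLinearMap
open scoped ComplexInnerProductSpace

/-- The orthogonal projection of `H` onto a closed subspace `W`, viewed as an operator
`H →L[ℂ] H`. -/
noncomputable def proj {H : Type*} [NormedAddCommGroup H] [InnerProductSpace ℂ H]
    (W : Submodule ℂ H) [W.HasOrthogonalProjection] : H →L[ℂ] H :=
  W.subtypeL.comp (W.orthogonalProjectionOnto)

set_option linter.unnecessarySimpa false

lemma proj_mem {H : Type*} [NormedAddCommGroup H] [InnerProductSpace ℂ H]
    (M : Submodule ℂ H) [M.HasOrthogonalProjection] {x : H} (hx : x ∈ M) :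
    proj M x = x := by
  simp [_root_.proj, Submodule.starProjection_eq_self_iff.mpr hx]

lemma proj_orth {H : Type*} [NormedAddCommGroup H] [InnerProductSpace ℂ H]
    (M : Submodule ℂ H) [M.HasOrthogonalProjection] {x : H} (hx : x ∈ Mᗮ) :
    proj M x = 0 := by
  simp [_root_.proj, Submodule.orthogonalProjectionOnto_apply_of_mem_orthogonal hx]

lemma sub_proj_mem_orth {H : Type*} [NormedAddCommGroup H] [InnerProductSpace ℂ H]
    (M : Submodule ℂ H) [M.HasOrthogonalProjection] (z : H) :
    z - proj M z ∈ Mᗮ := by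
  simpa [_root_.proj] using Submodule.sub_starProjection_mem_orthogonal (K := M) z

lemma proj_adj_proj_map {H : Type*} [NormedAddCommGroup H] [InnerProductSpace ℂ H]
    [CompleteSpace H]
    (M : Submodule ℂ H) [CompleteSpace M] (Wop : H →L[ℂ] H) [CompleteSpace (M.map (Wop : H →ₗ[ℂ] H))]
    (z : H) :
    proj M ((adjoint Wop) (proj (M.map (Wop : H →ₗ[ℂ] H)) z)) = proj M ((adjoint Wop) z) := by
  have hz := sub_proj_mem_orth (M.map (Wop : H →ₗ[ℂ] H)) z
  have h : (adjoint Wop) z - (adjoint Wop) (proj (M.map (Wop : H →ₗ[ℂ] H)) z) ∈ Mᗮ := by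
    rw [Submodule.mem_orthogonal]
    intro m hm
    rw [← map_sub, adjoint_inner_right]
    exact (Submodule.mem_orthogonal _ _).mp hz (Wop m) (Submodule.mem_map_of_mem hm)
  have := proj_orth M h
  rw [map_sub] at this
  linear_combination (norm := abel) -this

lemma adj_comm {H : Type*} [NormedAddCommGroup H] [InnerProductSpace ℂ H] [CompleteSpace H]
    (Wop T : H →L[ℂ] H) (h : (adjoint Wop) ∘L T = T ∘L (adjoint Wop)) :
    (adjoint T) ∘L Wop = Wop ∘L (adjoint T) := by
  have := congrArg adjoint h
  rwa [adjoint_comp, adjoint_comp, adjoint_adjoint] at this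

lemma component_eq {H : Type*} [NormedAddCommGroup H] [InnerProductSpace ℂ H] [CompleteSpace H]
    {K : Type*} [NormedAddCommGroup K] [InnerProductSpace ℂ K] [CompleteSpace K]
    (M : Submodule ℂ H) [CompleteSpace M] (Wop T T₁ : H →L[ℂ] H) (Λ : H →L[ℂ] K)
    [CompleteSpace (M.map (Wop : H →ₗ[ℂ] H))]
    (hWT : (adjoint Wop) ∘L T = T ∘L (adjoint Wop))
    (hWT₁ : (adjoint Wop) ∘L T₁ = T₁ ∘L (adjoint Wop))
    (c : ℝ) (f : H) :
    c • (adjoint T) (_root_.proj (M.map (Wop : H →ₗ[ℂ] H)) (Wop (_root_.proj M ((adjoint Λ)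
        (Λ (_root_.proj M ((adjoint Wop) (_root_.proj (M.map (Wop : H →ₗ[ℂ] H)) (T₁ f))))))))) =
    Wop (c • (adjoint T) (_root_.proj M ((adjoint Λ) (Λ (_root_.proj M (T₁ ((adjoint Wop) f))))))) := by
  have h1 : _root_.proj M ((adjoint Wop) (_root_.proj (M.map (Wop : H →ₗ[ℂ] H)) (T₁ f)))
      = _root_.proj M (T₁ ((adjoint Wop) f)) := by
    rw [proj_adj_proj_map]
    congr 1
    exact congrFun (congrArg DFunLike.coe hWT₁) f
  rw [h1]
  have h2 : _root_.proj (M.map (Wop : H →ₗ[ℂ] H)) (Wop (_root_.proj M ((adjoint Λ)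
      (Λ (_root_.proj M (T₁ ((adjoint Wop) f)))))))
      = Wop (_root_.proj M ((adjoint Λ) (Λ (_root_.proj M (T₁ ((adjoint Wop) f)))))) := by
    apply proj_mem
    apply Submodule.mem_map_of_mem
    simp [_root_.proj]
  rw [h2]
  have h3 := adj_comm Wop T hWT
  have h4 : (adjoint T) (Wop (_root_.proj M ((adjoint Λ) (Λ (_root_.proj M (T₁ ((adjoint Wop) f)))))))
      = Wop ((adjoint T) (_root_.proj M ((adjoint Λ) (Λ (_root_.proj M (T₁ ((adjoint Wop) f))))))) :=
    congrFun (congrArg DFunLike.coe h3) _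
  rw [h4, map_smul_of_tower]

set_option maxHeartbeats 1000000

/-- in the setting of Statement 5 (with frame operators `S_C` of `Λ` and
`S_{C'}` of `Γ`), the frame operator of the family `{(X_j, Δ_j, v_j)}` with
`X_j = (W ⊕ V)(W_j ⊕ V_j)` and `Δ_j = (Λ_j ⊕ Γ_j) P_{W_j ⊕ V_j} (W* ⊕ V*)` equals
`(W ⊕ V)(S_C ⊕ S_{C'})(W ⊕ V)*`; componentwise, for all `(f, g) ∈ H ⊕ X` the series
`∑_j v_j² (T ⊕ U)* P_{X_j} Δ_j* Δ_j P_{X_j} (T₁ ⊕ U₁)(f, g)` sums to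
`(W S_C W* f, V S_{C'} V* g)`. -/
theorem stmt6
    {H : Type*} [NormedAddCommGroup H] [InnerProductSpace ℂ H] [CompleteSpace H]
    {X : Type*} [NormedAddCommGroup X] [InnerProductSpace ℂ X] [CompleteSpace X]
    {J : Type*} [Countable J]
    {Hj : J → Type*} [∀ j, NormedAddCommGroup (Hj j)] [∀ j, InnerProductSpace ℂ (Hj j)]
    [∀ j, CompleteSpace (Hj j)]
    {Xj : J → Type*} [∀ j, NormedAddCommGroup (Xj j)] [∀ j, InnerProductSpace ℂ (Xj j)]
    [∀ j, CompleteSpace (Xj j)]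
    (W : J → Submodule ℂ H) [∀ j, CompleteSpace (W j)]
    (V : J → Submodule ℂ X) [∀ j, CompleteSpace (V j)]
    (v : J → ℝ) (hv : ∀ j, 0 < v j)
    (Λ : ∀ j, H →L[ℂ] Hj j) (Γ : ∀ j, X →L[ℂ] Xj j)
    (T T₁ K₁ : H →L[ℂ] H) (U U₁ K₂ : X →L[ℂ] X)
    -- `T`, `T₁`, `U`, `U₁` are invertible
    (Tinv T₁inv : H →L[ℂ] H) (Uinv U₁inv : X →L[ℂ] X)
    (hT₁ : Tinv ∘L T = 1) (hT₂ : T ∘L Tinv = 1)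
    (hT₁' : T₁inv ∘L T₁ = 1) (hT₂' : T₁ ∘L T₁inv = 1)
    (hU₁ : Uinv ∘L U = 1) (hU₂ : U ∘L Uinv = 1)
    (hU₁' : U₁inv ∘L U₁ = 1) (hU₂' : U₁ ∘L U₁inv = 1)
    -- `Λ` is a `(T,T₁)`-controlled `K₁`-g-fusion frame for `H` with bounds `A₁, B₁`
    (A₁ B₁ : ℝ) (hA₁ : 0 < A₁) (hAB₁ : A₁ ≤ B₁)
    (hlowerΛ : ∀ f : H, A₁ * ‖(adjoint K₁) f‖ ^ 2
      ≤ ∑' j, (v j) ^ 2 * (⟪(Λ j) (proj (W j) (T₁ f)), (Λ j) (proj (W j) (T f))⟫).re)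
    (hupperΛ : ∀ f : H,
      (∑' j, (v j) ^ 2 * (⟪(Λ j) (proj (W j) (T₁ f)), (Λ j) (proj (W j) (T f))⟫).re)
        ≤ B₁ * ‖f‖ ^ 2)
    -- `Γ` is a `(U,U₁)`-controlled `K₂`-g-fusion frame for `X` with bounds `A₂, B₂`
    (A₂ B₂ : ℝ) (hA₂ : 0 < A₂) (hAB₂ : A₂ ≤ B₂)
    (hlowerΓ : ∀ g : X, A₂ * ‖(adjoint K₂) g‖ ^ 2
      ≤ ∑' j, (v j) ^ 2 * (⟪(Γ j) (proj (V j) (U₁ g)), (Γ j) (proj (V j) (U g))⟫).re)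
    (hupperΓ : ∀ g : X,
      (∑' j, (v j) ^ 2 * (⟪(Γ j) (proj (V j) (U₁ g)), (Γ j) (proj (V j) (U g))⟫).re)
        ≤ B₂ * ‖g‖ ^ 2)
    -- `S_C` and `S_{C'}` are the respective frame operators
    (SC : H →L[ℂ] H) (SC' : X →L[ℂ] X)
    (hSC : ∀ f : H, HasSum
      (fun j => (v j) ^ 2 •
        (adjoint T) (proj (W j) ((adjoint (Λ j)) ((Λ j) (proj (W j) (T₁ f)))))) (SC f))
    (hSC' : ∀ g : X, HasSum
      (fun j => (v j) ^ 2 •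
        (adjoint U) (proj (V j) ((adjoint (Γ j)) ((Γ j) (proj (V j) (U₁ g)))))) (SC' g))
    -- `W` and `V` are invertible; `W*` commutes with `T, T₁`; `V*` commutes with `U, U₁`
    (Wop Winv : H →L[ℂ] H) (Vop Vinv : X →L[ℂ] X)
    [∀ j, CompleteSpace ((W j).map (Wop : H →ₗ[ℂ] H))] [∀ j, CompleteSpace ((V j).map (Vop : X →ₗ[ℂ] X))]
    (hW₁ : Winv ∘L Wop = 1) (hW₂ : Wop ∘L Winv = 1)
    (hV₁ : Vinv ∘L Vop = 1) (hV₂ : Vop ∘L Vinv = 1)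
    (hWT : (adjoint Wop) ∘L T = T ∘L (adjoint Wop))
    (hWT₁ : (adjoint Wop) ∘L T₁ = T₁ ∘L (adjoint Wop))
    (hVU : (adjoint Vop) ∘L U = U ∘L (adjoint Vop))
    (hVU₁ : (adjoint Vop) ∘L U₁ = U₁ ∘L (adjoint Vop)) :
    ∀ (f : H) (g : X),
      HasSum
        (fun j =>
          (((v j) ^ 2 •
              (adjoint T) (proj ((W j).map (Wop : H →ₗ[ℂ] H)) (Wop (proj (W j) ((adjoint (Λ j))
                ((Λ j) (proj (W j) ((adjoint Wop) (proj ((W j).map (Wop : H →ₗ[ℂ] H)) (T₁ f))))))))),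
            (v j) ^ 2 •
              (adjoint U) (proj ((V j).map (Vop : X →ₗ[ℂ] X)) (Vop (proj (V j) ((adjoint (Γ j))
                ((Γ j) (proj (V j) ((adjoint Vop) (proj ((V j).map (Vop : X →ₗ[ℂ] X)) (U₁ g)))))))))) :
            H × X))
        ((Wop (SC ((adjoint Wop) f)), Vop (SC' ((adjoint Vop) g))) : H × X) := by

  intro f g
  have hmain := (Wop.hasSum (hSC ((adjoint Wop) f))).prodMk
    (Vop.hasSum (hSC' ((adjoint Vop) g)))
  convert hmain using 1
  funext j
  exact Prod.ext
    (component_eq (W j) Wop T T₁ (Λ j) hWT hWT₁ ((v j) ^ 2) f)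
    (component_eq (V j) Vop U U₁ (Γ j) hVU hVU₁ ((v j) ^ 2) g)
end

section
/- Let Λ_T = {(W_j, Λ_j, w_j)}_{j∈J} be a (T,T)-controlled g-fusion Bessel sequence in H with bound D₁ and Γ_U = {(V_j, Γ_j, v_j)}_{j∈J} a (U,U)-controlled g-fusion Bessel sequence in H with bound D₂, where Λ_j, Γ_j : H → H_j and T, U are bounded invertible operators on H. Then for every f ∈ H the series ∑_{j∈J} v_j w_j T* P_{W_j} Λ_j* Γ_j P_{V_j} U f converges unconditionally in H, and the frame operator S_{TΛΓU} for the pair (Λ_T, Γ_U) defined by S_{TΛΓU} f = ∑_{j∈J} v_j w_j T* P_{W_j} Λ_j* Γ_j P_{V_j} U f is a bounded linear operator on H with ‖S_{TΛΓU} f‖ ≤ √(D₁ D₂) ‖f‖ for all f. -/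
open ContinuousLinearMap
open scoped ComplexInnerProductSpace

lemma proj_isSelfAdjoint {H : Type*} [NormedAddCommGroup H] [InnerProductSpace ℂ H]
    [CompleteSpace H] (W : Submodule ℂ H) [CompleteSpace W] :
    IsSelfAdjoint (proj W) :=
  isSelfAdjoint_starProjection W

lemma inner_proj_left {H : Type*} [NormedAddCommGroup H] [InnerProductSpace ℂ H]
    [CompleteSpace H] (W : Submodule ℂ H) [CompleteSpace W] (x y : H) :
    ⟪proj W x, y⟫ = ⟪x, proj W y⟫ := by
  conv_lhs => rw [← (proj_isSelfAdjoint W).adjoint_eq]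
  exact ContinuousLinearMap.adjoint_inner_left _ _ _

/-- for a `(T,T)`-controlled g-fusion Bessel sequence `Λ_T` (bound `D₁`) and
a `(U,U)`-controlled g-fusion Bessel sequence `Γ_U` (bound `D₂`), the series
`∑_j v_j w_j T* P_{W_j} Λ_j* Γ_j P_{V_j} U f` converges unconditionally for every `f` and
defines a bounded linear operator `S_{TΛΓU}` with `‖S_{TΛΓU} f‖ ≤ √(D₁ D₂) ‖f‖`. -/
theorem stmt11
    {H : Type*} [NormedAddCommGroup H] [InnerProductSpace ℂ H] [CompleteSpace H]
    {J : Type*} [Countable J]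
    {Hj : J → Type*} [∀ j, NormedAddCommGroup (Hj j)] [∀ j, InnerProductSpace ℂ (Hj j)]
    [∀ j, CompleteSpace (Hj j)]
    (W V : J → Submodule ℂ H) [∀ j, CompleteSpace (W j)] [∀ j, CompleteSpace (V j)]
    (w v : J → ℝ) (hw : ∀ j, 0 < w j) (hv : ∀ j, 0 < v j)
    (Λ Γ : ∀ j, H →L[ℂ] Hj j)
    (T U : H →L[ℂ] H)
    -- `T` and `U` are invertible
    (Tinv Uinv : H →L[ℂ] H)
    (hT₁ : Tinv ∘L T = 1) (hT₂ : T ∘L Tinv = 1)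
    (hU₁ : Uinv ∘L U = 1) (hU₂ : U ∘L Uinv = 1)
    -- `Λ_T` is a `(T,T)`-controlled g-fusion Bessel sequence with bound `D₁`
    (D₁ : ℝ) (hD₁ : 0 < D₁)
    (hsumΛ : ∀ f : H, Summable fun j => (w j) ^ 2 * ‖(Λ j) (proj (W j) (T f))‖ ^ 2)
    (hBesselΛ : ∀ f : H,
      (∑' j, (w j) ^ 2 * ‖(Λ j) (proj (W j) (T f))‖ ^ 2) ≤ D₁ * ‖f‖ ^ 2)
    -- `Γ_U` is a `(U,U)`-controlled g-fusion Bessel sequence with bound `D₂`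
    (D₂ : ℝ) (hD₂ : 0 < D₂)
    (hsumΓ : ∀ f : H, Summable fun j => (v j) ^ 2 * ‖(Γ j) (proj (V j) (U f))‖ ^ 2)
    (hBesselΓ : ∀ f : H,
      (∑' j, (v j) ^ 2 * ‖(Γ j) (proj (V j) (U f))‖ ^ 2) ≤ D₂ * ‖f‖ ^ 2) :
    ∃ S : H →L[ℂ] H, ∀ f : H,
      HasSum
        (fun j => (v j * w j) •
          (adjoint T) (proj (W j) ((adjoint (Λ j)) ((Γ j) (proj (V j) (U f)))))) (S f) ∧
      ‖S f‖ ≤ Real.sqrt (D₁ * D₂) * ‖f‖ := by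
  -- the summands, as a family of continuous linear maps in `f`
  set B : J → H →L[ℂ] H := fun j =>
    (v j * w j) •
      ((adjoint T) ∘L (proj (W j)) ∘L (adjoint (Λ j)) ∘L (Γ j) ∘L (proj (V j)) ∘L U) with hB
  have hBapp : ∀ j (f : H), B j f = (v j * w j) •
      (adjoint T) (proj (W j) ((adjoint (Λ j)) ((Γ j) (proj (V j) (U f))))) := fun j f => rfl
  -- the key inner product identity
  have hinner : ∀ j (f g : H), ⟪B j f, g⟫ =
      ((v j * w j : ℝ) : ℂ) * ⟪(Γ j) (proj (V j) (U f)), (Λ j) (proj (W j) (T g))⟫ := by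
    intro j f g
    rw [hBapp, ← algebraMap_smul ℂ (v j * w j), Complex.coe_algebraMap, inner_smul_left,
      Complex.conj_ofReal, ContinuousLinearMap.adjoint_inner_left, inner_proj_left,
      ContinuousLinearMap.adjoint_inner_left]
  -- Cauchy–Schwarz-type estimate for finite partial sums paired with a vector `g`
  have keyg : ∀ (f g : H) (t : Finset J), ‖⟪∑ j ∈ t, B j f, g⟫‖ ≤
      Real.sqrt (∑ j ∈ t, (v j) ^ 2 * ‖(Γ j) (proj (V j) (U f))‖ ^ 2) *
      Real.sqrt (∑ j ∈ t, (w j) ^ 2 * ‖(Λ j) (proj (W j) (T g))‖ ^ 2) := by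
    intro f g t
    rw [sum_inner]
    calc ‖∑ j ∈ t, ⟪B j f, g⟫‖ ≤ ∑ j ∈ t, ‖⟪B j f, g⟫‖ := norm_sum_le _ _
      _ ≤ ∑ j ∈ t, (v j * ‖(Γ j) (proj (V j) (U f))‖) * (w j * ‖(Λ j) (proj (W j) (T g))‖) := by
          refine Finset.sum_le_sum fun j _ => ?_
          rw [hinner, norm_mul, Complex.norm_real, Real.norm_eq_abs,
            abs_of_pos (mul_pos (hv j) (hw j))]
          calc v j * w j * ‖⟪(Γ j) (proj (V j) (U f)), (Λ j) (proj (W j) (T g))⟫‖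
              ≤ v j * w j * (‖(Γ j) (proj (V j) (U f))‖ * ‖(Λ j) (proj (W j) (T g))‖) := by
                have := norm_inner_le_norm (𝕜 := ℂ) ((Γ j) (proj (V j) (U f)))
                  ((Λ j) (proj (W j) (T g)))
                nlinarith [mul_pos (hv j) (hw j)]
            _ = (v j * ‖(Γ j) (proj (V j) (U f))‖) * (w j * ‖(Λ j) (proj (W j) (T g))‖) := by ring
      _ ≤ Real.sqrt (∑ j ∈ t, (v j * ‖(Γ j) (proj (V j) (U f))‖) ^ 2) *
          Real.sqrt (∑ j ∈ t, (w j * ‖(Λ j) (proj (W j) (T g))‖) ^ 2) :=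
          Real.sum_mul_le_sqrt_mul_sqrt _ _ _
      _ = _ := by
          congr 2 <;> exact Finset.sum_congr rfl fun j _ => by ring
  -- norm estimate for finite partial sums
  have keyn : ∀ (f : H) (t : Finset J), ‖∑ j ∈ t, B j f‖ ≤
      Real.sqrt (∑ j ∈ t, (v j) ^ 2 * ‖(Γ j) (proj (V j) (U f))‖ ^ 2) * Real.sqrt D₁ := by
    intro f t
    set x := ∑ j ∈ t, B j f with hx
    set C := Real.sqrt (∑ j ∈ t, (v j) ^ 2 * ‖(Γ j) (proj (V j) (U f))‖ ^ 2) with hC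
    have hC0 : 0 ≤ C := Real.sqrt_nonneg _
    rcases eq_or_lt_of_le (norm_nonneg x) with h | h
    · rw [← h]; positivity
    · have h1 : ‖x‖ ^ 2 = ‖⟪x, x⟫‖ := by
        rw [inner_self_eq_norm_sq_to_K]
        simp [pow_two]
      have h3 : ∑ j ∈ t, (w j) ^ 2 * ‖(Λ j) (proj (W j) (T x))‖ ^ 2 ≤ D₁ * ‖x‖ ^ 2 :=
        le_trans (Summable.sum_le_tsum t (fun j _ => by positivity) (hsumΛ x)) (hBesselΛ x)
      have h4 : Real.sqrt (∑ j ∈ t, (w j) ^ 2 * ‖(Λ j) (proj (W j) (T x))‖ ^ 2) ≤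
          Real.sqrt D₁ * ‖x‖ := by
        calc Real.sqrt (∑ j ∈ t, (w j) ^ 2 * ‖(Λ j) (proj (W j) (T x))‖ ^ 2)
            ≤ Real.sqrt (D₁ * ‖x‖ ^ 2) := Real.sqrt_le_sqrt h3
          _ = Real.sqrt D₁ * ‖x‖ := by
              rw [Real.sqrt_mul hD₁.le, Real.sqrt_sq (norm_nonneg x)]
      have h5 : ‖x‖ ^ 2 ≤ C * (Real.sqrt D₁ * ‖x‖) := by
        rw [h1]
        exact le_trans (keyg f x t) (by
          exact mul_le_mul_of_nonneg_left h4 hC0)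
      have h6 : ‖x‖ * ‖x‖ ≤ (C * Real.sqrt D₁) * ‖x‖ := by nlinarith
      exact le_of_mul_le_mul_right h6 h
  -- summability of the series
  have hsum : ∀ f : H, Summable fun j => B j f := by
    intro f
    rw [summable_iff_vanishing]
    intro e he
    rcases Metric.mem_nhds_iff.mp he with ⟨ε, hε, hball⟩
    have hd : (0:ℝ) < Real.sqrt D₁ + 1 := by positivity
    set δ := (ε / (Real.sqrt D₁ + 1)) ^ 2 with hδdef
    have hδ : 0 < δ := by positivity
    obtain ⟨s, hs⟩ := (summable_iff_vanishing.mp (hsumΓ f)) (Metric.ball 0 δ)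
      (Metric.ball_mem_nhds 0 hδ)
    refine ⟨s, fun t ht => ?_⟩
    apply hball
    rw [Metric.mem_ball, dist_zero_right]
    have hc := hs t ht
    rw [Metric.mem_ball, dist_zero_right, Real.norm_eq_abs] at hc
    have hcn : 0 ≤ ∑ j ∈ t, (v j) ^ 2 * ‖(Γ j) (proj (V j) (U f))‖ ^ 2 :=
      Finset.sum_nonneg fun j _ => by positivity
    have hcd : ∑ j ∈ t, (v j) ^ 2 * ‖(Γ j) (proj (V j) (U f))‖ ^ 2 < δ := by
      rwa [abs_of_nonneg hcn] at hc
    calc ‖∑ j ∈ t, B j f‖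
        ≤ Real.sqrt (∑ j ∈ t, (v j) ^ 2 * ‖(Γ j) (proj (V j) (U f))‖ ^ 2) * Real.sqrt D₁ :=
          keyn f t
      _ < Real.sqrt δ * (Real.sqrt D₁ + 1) := by
          calc Real.sqrt (∑ j ∈ t, (v j) ^ 2 * ‖(Γ j) (proj (V j) (U f))‖ ^ 2) * Real.sqrt D₁
              ≤ Real.sqrt (∑ j ∈ t, (v j) ^ 2 * ‖(Γ j) (proj (V j) (U f))‖ ^ 2) *
                (Real.sqrt D₁ + 1) :=
                mul_le_mul_of_nonneg_left (by linarith) (Real.sqrt_nonneg _)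
            _ < Real.sqrt δ * (Real.sqrt D₁ + 1) :=
                mul_lt_mul_of_pos_right (Real.sqrt_lt_sqrt hcn hcd) hd
      _ = ε := by
          rw [hδdef, Real.sqrt_sq (by positivity)]
          field_simp
  -- the norm bound for the full sums
  have hbound : ∀ f : H, ‖∑' j, B j f‖ ≤ Real.sqrt (D₁ * D₂) * ‖f‖ := by
    intro f
    have hptl : ∀ t : Finset J, ‖∑ j ∈ t, B j f‖ ≤ Real.sqrt (D₁ * D₂) * ‖f‖ := by
      intro t
      refine (keyn f t).trans ?_
      have h3 : ∑ j ∈ t, (v j) ^ 2 * ‖(Γ j) (proj (V j) (U f))‖ ^ 2 ≤ D₂ * ‖f‖ ^ 2 :=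
        le_trans (Summable.sum_le_tsum t (fun j _ => by positivity) (hsumΓ f)) (hBesselΓ f)
      calc Real.sqrt (∑ j ∈ t, (v j) ^ 2 * ‖(Γ j) (proj (V j) (U f))‖ ^ 2) * Real.sqrt D₁
          ≤ Real.sqrt (D₂ * ‖f‖ ^ 2) * Real.sqrt D₁ :=
            mul_le_mul_of_nonneg_right (Real.sqrt_le_sqrt h3) (Real.sqrt_nonneg _)
        _ = Real.sqrt (D₁ * D₂) * ‖f‖ := by
            rw [Real.sqrt_mul hD₂.le, Real.sqrt_sq (norm_nonneg f), Real.sqrt_mul hD₁.le]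
            ring
    have hlim : Filter.Tendsto (fun t : Finset J => ‖∑ j ∈ t, B j f‖) Filter.atTop
        (nhds ‖∑' j, B j f‖) := (hsum f).hasSum.norm
    exact le_of_tendsto hlim (Filter.Eventually.of_forall hptl)
  -- assemble the operator
  set L : H →ₗ[ℂ] H :=
    { toFun := fun f => ∑' j, B j f
      map_add' := fun f g => by
        show (∑' j, B j (f + g)) = (∑' j, B j f) + (∑' j, B j g)
        have : (fun j => B j (f + g)) = fun j => B j f + B j g :=
          funext fun j => map_add (B j) f g
        rw [this]
        exact ((hsum f).hasSum.add (hsum g).hasSum).tsum_eq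
      map_smul' := fun c f => by
        show (∑' j, B j (c • f)) = c • (∑' j, B j f)
        have : (fun j => B j (c • f)) = fun j => c • B j f :=
          funext fun j => map_smul (B j) c f
        rw [this]
        exact ((hsum f).hasSum.const_smul c).tsum_eq } with hL
  refine ⟨L.mkContinuous (Real.sqrt (D₁ * D₂)) hbound, fun f => ⟨?_, hbound f⟩⟩
  exact (hsum f).hasSum
end
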